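/- In the data setting, rank [[A − λI],[C]] = n holds for every A ∈ 𝒜_dat and every λ ∈ ℂ (i.e., by the Hautus test, the data are informative for observability of the pair (C,A)) if and only if ker C ⊆ im X₋ and rank [[R − λMX₋],[CX₋]] = rank X₋ for all λ ∈ ℂ. Similarly, rank [[A − λI],[C]] = n holds for every A ∈ 𝒜_dat and every λ ∈ ℂ with |λ| ≥ 1 (informativity for detectability) if and only if ker C ⊆ im X₋ and rank [[R − λMX₋],[CX₋]] = rank X₋ for all λ ∈ ℂ with |λ| ≥ 1. -/

import Mathlib

/-!
Since `ker [M N] = im [E; F]`, a matrix `A` is consistent with the data exactly when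
`M A X₋ = R`. Fixing one consistent `A₀`, the consistent matrices are the `A₀ + Δ` with
`M Δ X₋ = 0`, and the data matrix of the rank condition factors as `[M (A₀ - λ I); C] X₋`.

If `C x = 0` for a real `x ∉ im X₋`, a rank-one `Δ` vanishing on `im X₋` turns `x` into a real
eigenvector of `A₀ + Δ`. If `x ≠ 0` satisfies `M (A₀ - λ I) x = 0` and `C x = 0`, a real `Δ` with
`M Δ = 0` and rank at most two makes `x` an eigenvector for `λ` as soon as `Re x` and `Im x` are
independent; otherwise `x` is a complex multiple of a real `w`, and either `λ` is real or
`M w = M A₀ w = 0`, so that `w` can be made a real eigenvector for `λ`, resp. for any real point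
of the region. Conversely, an unobservable eigenvector of a consistent `A` lies in the
complexification of `im X₋` and is annihilated by `[M (A₀ - λ I); C]`.
-/

open Matrix

/-- Complexification of a real matrix. -/
noncomputable def cx {a b : ℕ} (M : Matrix (Fin a) (Fin b) ℝ) : Matrix (Fin a) (Fin b) ℂ :=
  M.map (algebraMap ℝ ℂ)

/-- First T columns of the state data matrix X. -/
def Xminus {n T : ℕ} (X : Matrix (Fin n) (Fin (T + 1)) ℝ) : Matrix (Fin n) (Fin T) ℝ :=
  Matrix.of fun i t => X i t.castSucc

/-- Last T columns of the state data matrix X. -/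
def Xplus {n T : ℕ} (X : Matrix (Fin n) (Fin (T + 1)) ℝ) : Matrix (Fin n) (Fin T) ℝ :=
  Matrix.of fun i t => X i t.succ

/-- The set of state matrices A consistent with the noisy data (U₋, X, Y₋). -/
def Adat {n m p q T : ℕ} (B : Matrix (Fin n) (Fin m) ℝ) (C : Matrix (Fin p) (Fin n) ℝ)
    (D : Matrix (Fin p) (Fin m) ℝ) (E : Matrix (Fin n) (Fin q) ℝ)
    (F : Matrix (Fin p) (Fin q) ℝ) (U : Matrix (Fin m) (Fin T) ℝ)
    (X : Matrix (Fin n) (Fin (T + 1)) ℝ) (Y : Matrix (Fin p) (Fin T) ℝ) :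
    Set (Matrix (Fin n) (Fin n) ℝ) :=
  {A | ∃ W : Matrix (Fin q) (Fin T) ℝ,
    Xplus X = A * Xminus X + B * U + E * W ∧ Y = C * Xminus X + D * U + F * W}

namespace Matrix

variable {K : Type*} [Field K] {l m n : Type*} [Fintype m] [Fintype n]

theorem rank_mul_eq_rank_right_iff (G : Matrix l m K) (X : Matrix m n K) :
    (G * X).rank = X.rank ↔ ∀ ξ, G *ᵥ (X *ᵥ ξ) = 0 → X *ᵥ ξ = 0 := by
  have hle : LinearMap.ker X.mulVecLin ≤ LinearMap.ker (G * X).mulVecLin := fun ξ hξ => by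
    simp_all
  have hX := LinearMap.finrank_range_add_finrank_ker X.mulVecLin
  have hGX := LinearMap.finrank_range_add_finrank_ker (G * X).mulVecLin
  rw [rank, rank]
  constructor
  · intro h ξ hξ
    have hker := Submodule.eq_of_le_of_finrank_eq hle (by omega)
    have : ξ ∈ LinearMap.ker (G * X).mulVecLin := by simpa [← mulVec_mulVec] using hξ
    rw [← hker] at this
    simpa using this
  · intro h
    have hker : LinearMap.ker X.mulVecLin = LinearMap.ker (G * X).mulVecLin :=
      le_antisymm hle fun ξ hξ => by simpa using h ξ (by simpa [mulVec_mulVec] using hξ)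
    rw [hker] at hX
    omega

omit [Fintype m] in
theorem rank_eq_card_width_iff [DecidableEq n] (P : Matrix m n K) :
    P.rank = Fintype.card n ↔ ∀ x, P *ᵥ x = 0 → x = 0 := by
  simpa [rank_one] using rank_mul_eq_rank_right_iff P (1 : Matrix n n K)

omit [Fintype m] in
theorem fromRows_mulVec_eq_zero_iff {p : Type*} (P : Matrix m n K) (Q : Matrix p n K)
    (x : n → K) : fromRows P Q *ᵥ x = 0 ↔ P *ᵥ x = 0 ∧ Q *ᵥ x = 0 := by
  simp [fromRows_mulVec, funext_iff]

theorem rank_fromRows_sub_smul_one_eq_card_iff [DecidableEq n] {p : Type*}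
    (A : Matrix n n K) (C : Matrix p n K) (μ : K) :
    (fromRows (A - μ • 1) C).rank = Fintype.card n ↔
      ∀ x, A *ᵥ x = μ • x → C *ᵥ x = 0 → x = 0 := by
  simp only [rank_eq_card_width_iff, fromRows_mulVec_eq_zero_iff, sub_mulVec, smul_mulVec,
    one_mulVec, sub_eq_zero, and_imp]

omit [Fintype m] in
theorem exists_dotProduct_eq_one_of_notMem [DecidableEq n] {W : Submodule K (n → K)}
    {x : n → K} (hx : x ∉ W) : ∃ f : n → K, f ⬝ᵥ x = 1 ∧ ∀ y ∈ W, f ⬝ᵥ y = 0 := by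
  obtain ⟨φ, hφx, hφW⟩ := W.exists_dual_map_eq_bot_of_notMem hx inferInstance
  have hφ (y : n → K) : (dotProductEquiv K n).symm φ ⬝ᵥ y = φ y :=
    congr($((dotProductEquiv K n).apply_symm_apply φ) y)
  refine ⟨(φ x)⁻¹ • (dotProductEquiv K n).symm φ, by simp [hφ, hφx], fun y hy => ?_⟩
  have : φ y = 0 := by simpa [hφW] using Submodule.mem_map_of_mem (f := φ) hy
  simp [hφ, this]

omit [Fintype m] in
theorem exists_dotProduct_eq_one_and_eq_zero [DecidableEq n] {u v : n → K}
    (h : LinearIndependent K ![u, v]) :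
    ∃ f : n → K, f ⬝ᵥ u = 1 ∧ f ⬝ᵥ v = 0 := by
  have hu : u ∉ Submodule.span K {v} := by
    rw [Submodule.mem_span_singleton]
    exact fun ⟨a, ha⟩ => (linearIndependent_fin2.1 h).2 a (by simpa using ha)
  obtain ⟨f, hfu, hfv⟩ := exists_dotProduct_eq_one_of_notMem hu
  exact ⟨f, hfu, hfv v (Submodule.mem_span_singleton_self v)⟩

omit [Fintype m] in
theorem add_vecMulVec_sub_mulVec_mulVec {A : Matrix n n K} {f x : n → K} (hf : f ⬝ᵥ x = 1)
    (c : n → K) : (A + vecMulVec (c - A *ᵥ x) f) *ᵥ x = c := by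
  simp [add_mulVec, vecMulVec_mulVec, hf]

theorem rank_map_algebraMap {L : Type*} [Field L] [Algebra K L] (A : Matrix m n K) :
    (A.map (algebraMap K L)).rank = A.rank := by
  let φ : (m → K) →ₗ[K] (m → L) := (Algebra.linearMap K L).compLeft m
  obtain ⟨b, hb_mem, hb_span, hb_li⟩ :=
    Submodule.exists_fun_fin_finrank_span_eq K (Set.range A.col)
  have hb_li' : LinearIndependent L (φ ∘ b) :=
    linearIndependent_algebraMap_comp_iff.2 hb_li
  have hspan : Submodule.span L (Set.range (φ ∘ b)) =
      Submodule.span L (Set.range (A.map (algebraMap K L)).col) := by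
    apply le_antisymm <;> rw [Submodule.span_le] <;> rintro _ ⟨i, rfl⟩
    · obtain ⟨j, hj⟩ := hb_mem i
      exact Submodule.subset_span ⟨j, by ext; simp [φ, ← hj]⟩
    · have hcol : A.col i ∈ Submodule.span K (Set.range b) := by
        rw [hb_span]; exact Submodule.subset_span (Set.mem_range_self i)
      have := Submodule.mem_map_of_mem (f := φ) hcol
      rw [← Submodule.span_image, ← Set.range_comp] at this
      exact Submodule.span_le_restrictScalars K L _ this
  rw [rank_eq_finrank_span_cols, ← hspan, finrank_span_eq_card hb_li', Fintype.card_fin,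
    rank_eq_finrank_span_cols]

theorem exists_mul_eq_iff_mul_eq_zero {R : Type*} [CommRing R] {a q k T : Type*} [Fintype a]
    [Fintype q] {G : Matrix a q R} {H : Matrix k a R}
    (h : LinearMap.ker H.mulVecLin = LinearMap.range G.mulVecLin) (Z : Matrix a T R) :
    (∃ W : Matrix q T R, G * W = Z) ↔ H * Z = 0 := by
  have hcol (v : a → R) : (∃ w, G *ᵥ w = v) ↔ H *ᵥ v = 0 := by
    simpa using (SetLike.ext_iff.1 h v).symm
  constructor
  · rintro ⟨W, rfl⟩
    ext i t
    exact congrFun ((hcol _).1 ⟨fun j => W j t, rfl⟩) i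
  · intro hZ
    choose w hw using fun t => (hcol fun i => Z i t).2 (funext fun i => congrFun (congrFun hZ i) t)
    exact ⟨of fun j t => w t j, by ext i t; exact congrFun (hw t) i⟩

end Matrix

theorem mem_Adat_iff {n m p q T k : ℕ} {B : Matrix (Fin n) (Fin m) ℝ}
    {C : Matrix (Fin p) (Fin n) ℝ} {D : Matrix (Fin p) (Fin m) ℝ} {E : Matrix (Fin n) (Fin q) ℝ}
    {F : Matrix (Fin p) (Fin q) ℝ} {U : Matrix (Fin m) (Fin T) ℝ}
    {X : Matrix (Fin n) (Fin (T + 1)) ℝ} {Y : Matrix (Fin p) (Fin T) ℝ}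
    {M : Matrix (Fin k) (Fin n) ℝ} {N : Matrix (Fin k) (Fin p) ℝ}
    (hMN : LinearMap.ker (fromCols M N).mulVecLin = LinearMap.range (fromRows E F).mulVecLin)
    {R : Matrix (Fin k) (Fin T) ℝ}
    (hR : R = M * (Xplus X - B * U) + N * (Y - C * Xminus X - D * U))
    (A : Matrix (Fin n) (Fin n) ℝ) :
    A ∈ Adat B C D E F U X Y ↔ M * A * Xminus X = R := by
  have hAdat : A ∈ Adat B C D E F U X Y ↔ ∃ W : Matrix (Fin q) (Fin T) ℝ, fromRows E F * W =
      fromRows (Xplus X - B * U - A * Xminus X) (Y - C * Xminus X - D * U) := by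
    refine exists_congr fun W => ?_
    rw [fromRows_mul, fromRows_ext_iff]
    refine and_congr ?_ ?_ <;> constructor <;> intro h <;> rw [h] <;> abel
  rw [hAdat, exists_mul_eq_iff_mul_eq_zero hMN, fromCols_mul_fromRows, hR, Matrix.mul_sub,
    sub_add_eq_add_sub, sub_eq_zero, eq_comm, Matrix.mul_assoc]

section Complexification

variable {a b c : ℕ}

theorem cx_add (A A' : Matrix (Fin a) (Fin b) ℝ) : cx (A + A') = cx A + cx A' :=
  Matrix.map_add _ (map_add _) _ _

theorem cx_mul (A : Matrix (Fin a) (Fin b) ℝ) (A' : Matrix (Fin b) (Fin c) ℝ) :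
    cx (A * A') = cx A * cx A' :=
  Matrix.map_mul

theorem rank_cx (A : Matrix (Fin a) (Fin b) ℝ) : (cx A).rank = A.rank :=
  rank_map_algebraMap A

theorem cx_mulVec_ofReal (A : Matrix (Fin a) (Fin b) ℝ) (v : Fin b → ℝ) :
    cx A *ᵥ (Complex.ofReal ∘ v) = Complex.ofReal ∘ (A *ᵥ v) := by
  ext i; simp [cx, mulVec, dotProduct]

theorem re_cx_mulVec (A : Matrix (Fin a) (Fin b) ℝ) (x : Fin b → ℂ) :
    Complex.re ∘ (cx A *ᵥ x) = A *ᵥ (Complex.re ∘ x) := by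
  ext i; simp [cx, mulVec, dotProduct]

theorem im_cx_mulVec (A : Matrix (Fin a) (Fin b) ℝ) (x : Fin b → ℂ) :
    Complex.im ∘ (cx A *ᵥ x) = A *ᵥ (Complex.im ∘ x) := by
  ext i; simp [cx, mulVec, dotProduct]

theorem ofReal_re_add_I_smul_ofReal_im (x : Fin b → ℂ) :
    Complex.ofReal ∘ (Complex.re ∘ x) + Complex.I • Complex.ofReal ∘ (Complex.im ∘ x) = x := by
  ext i; simp [Complex.ext_iff]

theorem cx_mulVec_eq_zero_iff (A : Matrix (Fin a) (Fin b) ℝ) (x : Fin b → ℂ) :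
    cx A *ᵥ x = 0 ↔ A *ᵥ (Complex.re ∘ x) = 0 ∧ A *ᵥ (Complex.im ∘ x) = 0 := by
  simp only [← re_cx_mulVec, ← im_cx_mulVec, funext_iff, Complex.ext_iff]
  simp [forall_and]

theorem ker_cx_le_range_cx {C : Matrix (Fin a) (Fin b) ℝ} {X : Matrix (Fin b) (Fin c) ℝ}
    (h : LinearMap.ker C.mulVecLin ≤ LinearMap.range X.mulVecLin) :
    LinearMap.ker (cx C).mulVecLin ≤ LinearMap.range (cx X).mulVecLin := by
  intro x hx
  simp only [LinearMap.mem_ker, mulVecLin_apply, cx_mulVec_eq_zero_iff] at hx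
  obtain ⟨ξ, hξ⟩ := h (by simpa using hx.1)
  obtain ⟨η, hη⟩ := h (by simpa using hx.2)
  refine ⟨Complex.ofReal ∘ ξ + Complex.I • Complex.ofReal ∘ η, ?_⟩
  simp only [mulVecLin_apply] at hξ hη ⊢
  rw [mulVec_add, mulVec_smul, cx_mulVec_ofReal, cx_mulVec_ofReal, hξ, hη,
    ofReal_re_add_I_smul_ofReal_im]

end Complexification

section Perturbation

variable {n k p T : ℕ} {A₀ : Matrix (Fin n) (Fin n) ℝ} {M : Matrix (Fin k) (Fin n) ℝ}
  {C : Matrix (Fin p) (Fin n) ℝ}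

def IsUnobservableEigenvalue (A : Matrix (Fin n) (Fin n) ℝ) (C : Matrix (Fin p) (Fin n) ℝ)
    (μ : ℂ) : Prop :=
  ∃ x : Fin n → ℂ, x ≠ 0 ∧ cx A *ᵥ x = μ • x ∧ cx C *ᵥ x = 0

theorem rank_fromRows_cx_sub_smul_one_eq_iff (A : Matrix (Fin n) (Fin n) ℝ)
    (C : Matrix (Fin p) (Fin n) ℝ) (μ : ℂ) :
    (fromRows (cx A - μ • 1) (cx C)).rank = n ↔ ¬ IsUnobservableEigenvalue A C μ := by
  have h := rank_fromRows_sub_smul_one_eq_card_iff (cx A) (cx C) μ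
  rw [Fintype.card_fin] at h
  rw [h, IsUnobservableEigenvalue]
  simp only [not_exists, not_and]
  exact forall_congr' fun x => by tauto

theorem isUnobservableEigenvalue_ofReal {A : Matrix (Fin n) (Fin n) ℝ} {w : Fin n → ℝ} {r : ℝ}
    (hw : w ≠ 0) (hA : A *ᵥ w = r • w) (hC : C *ᵥ w = 0) : IsUnobservableEigenvalue A C r := by
  refine ⟨Complex.ofReal ∘ w, fun h => hw ?_, ?_, ?_⟩
  · ext i; simpa using congrFun h i
  · rw [cx_mulVec_ofReal, hA]; ext i; simp
  · rw [cx_mulVec_ofReal, hC]; ext i; simp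

theorem exists_perturbation_mulVec_eq_of_ne_zero {w c : Fin n → ℝ} (hw : w ≠ 0)
    (hc : M *ᵥ (c - A₀ *ᵥ w) = 0) :
    ∃ Δ, M * Δ = 0 ∧ (A₀ + Δ) *ᵥ w = c := by
  obtain ⟨f, hfw, -⟩ := exists_dotProduct_eq_one_of_notMem (W := ⊥) (by simpa using hw)
  exact ⟨vecMulVec (c - A₀ *ᵥ w) f, by rw [mul_vecMulVec, hc, zero_vecMulVec],
    add_vecMulVec_sub_mulVec_mulVec hfw c⟩

theorem exists_perturbation_mulVec_eq_of_notMem_range {X : Matrix (Fin n) (Fin T) ℝ} {x : Fin n → ℝ}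
    (hx : x ∉ LinearMap.range X.mulVecLin) (c : Fin n → ℝ) :
    ∃ Δ, Δ * X = 0 ∧ (A₀ + Δ) *ᵥ x = c := by
  obtain ⟨f, hfx, hfX⟩ := exists_dotProduct_eq_one_of_notMem hx
  have hfX' : f ᵥ* X = 0 := by
    ext j
    exact (by simpa [mulVec_single_one] using hfX _ ⟨Pi.single j 1, rfl⟩ : f ⬝ᵥ X.col j = 0)
  exact ⟨vecMulVec (c - A₀ *ᵥ x) f, by rw [vecMulVec_mul, hfX']; ext; simp [vecMulVec_apply],
    add_vecMulVec_sub_mulVec_mulVec hfx c⟩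

theorem exists_perturbation_cx_mulVec_eq_of_linearIndependent {x z : Fin n → ℂ}
    (hx : LinearIndependent ℝ ![Complex.re ∘ x, Complex.im ∘ x])
    (hz : cx M *ᵥ (z - cx A₀ *ᵥ x) = 0) :
    ∃ Δ, M * Δ = 0 ∧ cx (A₀ + Δ) *ᵥ x = z := by
  obtain ⟨f, hfre, hfim⟩ := exists_dotProduct_eq_one_and_eq_zero hx
  have hx' : LinearIndependent ℝ ![Complex.im ∘ x, Complex.re ∘ x] :=
    LinearIndependent.pair_symm_iff.1 hx
  obtain ⟨g, hgim, hgre⟩ := exists_dotProduct_eq_one_and_eq_zero hx'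
  generalize hd : z - cx A₀ *ᵥ x = d at hz
  rw [cx_mulVec_eq_zero_iff] at hz
  set Δ := vecMulVec (Complex.re ∘ d) f + vecMulVec (Complex.im ∘ d) g
  have hΔre : Δ *ᵥ (Complex.re ∘ x) = Complex.re ∘ d := by
    simp [Δ, add_mulVec, vecMulVec_mulVec, hfre, hgre]
  have hΔim : Δ *ᵥ (Complex.im ∘ x) = Complex.im ∘ d := by
    simp [Δ, add_mulVec, vecMulVec_mulVec, hfim, hgim]
  have hΔ : cx Δ *ᵥ x = d := by
    conv_lhs => rw [← ofReal_re_add_I_smul_ofReal_im x]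
    rw [mulVec_add, mulVec_smul, cx_mulVec_ofReal, cx_mulVec_ofReal, hΔre, hΔim,
      ofReal_re_add_I_smul_ofReal_im]
  refine ⟨Δ, ?_, ?_⟩
  · rw [Matrix.mul_add, mul_vecMulVec, mul_vecMulVec, hz.1, hz.2, zero_vecMulVec, zero_vecMulVec,
      add_zero]
  · rw [cx_add, add_mulVec, hΔ, ← hd, add_sub_cancel]

theorem exists_smul_ofReal_of_not_linearIndependent {x : Fin n → ℂ}
    (h : ¬ LinearIndependent ℝ ![Complex.re ∘ x, Complex.im ∘ x]) :
    ∃ (γ : ℂ) (w : Fin n → ℝ), x = γ • Complex.ofReal ∘ w := by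
  simp only [LinearIndependent.pair_iff, not_forall] at h
  obtain ⟨s, t, hst, hne⟩ := h
  -- `(s - t i) • x = i • (s • Im x - t • Re x)`
  have hζ : (s : ℂ) - t * Complex.I ≠ 0 := fun h0 => hne ⟨by simpa using congrArg Complex.re h0,
    by simpa using congrArg Complex.im h0⟩
  refine ⟨Complex.I / (s - t * Complex.I), s • (Complex.im ∘ x) - t • (Complex.re ∘ x), ?_⟩
  ext i
  have hi : s * (x i).re + t * (x i).im = 0 := by simpa using congrFun hst i
  rw [Pi.smul_apply, Function.comp_apply, smul_eq_mul, div_mul_eq_mul_div, eq_div_iff hζ]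
  apply Complex.ext <;> simp <;> linarith

theorem exists_ofReal_mem_eq_smul {S : Set ℂ} {r : ℝ} (hr : (r : ℂ) ∈ S) {lam : ℂ}
    (hlam : lam ∈ S) {a b : Fin k → ℝ} (h : Complex.ofReal ∘ a = lam • Complex.ofReal ∘ b) :
    ∃ r' : ℝ, (r' : ℂ) ∈ S ∧ a = r' • b := by
  have hre : a = lam.re • b := funext fun i => by simpa using congrArg Complex.re (congrFun h i)
  by_cases him : lam.im = 0
  · exact ⟨lam.re, by rwa [show (lam.re : ℂ) = lam from Complex.ext rfl him.symm], hre⟩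
  · have hb : b = 0 := funext fun i => by
      simpa [him] using (congrArg Complex.im (congrFun h i)).symm
    exact ⟨r, hr, by simp [hre, hb]⟩

theorem exists_perturbation_isUnobservableEigenvalue {S : Set ℂ} {r : ℝ} (hr : (r : ℂ) ∈ S)
    {lam : ℂ} (hlam : lam ∈ S) {x : Fin n → ℂ} (hx : x ≠ 0)
    (hM : cx M *ᵥ (lam • x - cx A₀ *ᵥ x) = 0) (hC : cx C *ᵥ x = 0) :
    ∃ Δ, M * Δ = 0 ∧ ∃ μ ∈ S, IsUnobservableEigenvalue (A₀ + Δ) C μ := by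
  by_cases hli : LinearIndependent ℝ ![Complex.re ∘ x, Complex.im ∘ x]
  · obtain ⟨Δ, hΔ, hΔx⟩ := exists_perturbation_cx_mulVec_eq_of_linearIndependent hli hM
    exact ⟨Δ, hΔ, lam, hlam, x, hx, hΔx, hC⟩
  obtain ⟨γ, w, rfl⟩ := exists_smul_ofReal_of_not_linearIndependent hli
  have hγ : γ ≠ 0 := by rintro rfl; simp at hx
  have hw : w ≠ 0 := by rintro rfl; simp at hx
  have hCw : C *ᵥ w = 0 := by
    rw [mulVec_smul, cx_mulVec_ofReal, smul_eq_zero_iff_right hγ] at hC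
    exact funext fun i => by simpa using congrFun hC i
  have hMw : Complex.ofReal ∘ (M *ᵥ (A₀ *ᵥ w)) = lam • Complex.ofReal ∘ (M *ᵥ w) := by
    rw [smul_comm, mulVec_smul, ← smul_sub, mulVec_smul, smul_eq_zero_iff_right hγ, mulVec_sub,
      mulVec_smul, cx_mulVec_ofReal, cx_mulVec_ofReal, cx_mulVec_ofReal, sub_eq_zero] at hM
    exact hM.symm
  obtain ⟨r', hr', hr'w⟩ := exists_ofReal_mem_eq_smul hr hlam hMw
  obtain ⟨Δ, hΔ, hΔw⟩ := exists_perturbation_mulVec_eq_of_ne_zero (A₀ := A₀) (c := r' • w) hw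
    (by rw [mulVec_sub, mulVec_smul, hr'w, sub_self])
  exact ⟨Δ, hΔ, r', hr', isUnobservableEigenvalue_ofReal hw hΔw hCw⟩

end Perturbation

section Hautus

variable {n k p T : ℕ} {M : Matrix (Fin k) (Fin n) ℝ} {C : Matrix (Fin p) (Fin n) ℝ}
  {X : Matrix (Fin n) (Fin T) ℝ}

theorem not_isUnobservableEigenvalue_of_ker_le_range {A₀ A : Matrix (Fin n) (Fin n) ℝ} {lam : ℂ}
    (hker : LinearMap.ker C.mulVecLin ≤ LinearMap.range X.mulVecLin)
    (hA : M * A * X = M * A₀ * X)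
    (hrank : ∀ ξ, fromRows (cx M * (cx A₀ - lam • 1)) (cx C) *ᵥ (cx X *ᵥ ξ) = 0 →
      cx X *ᵥ ξ = 0) :
    ¬ IsUnobservableEigenvalue A C lam := by
  rintro ⟨x, hx, hAx, hCx⟩
  obtain ⟨ξ, rfl⟩ := ker_cx_le_range_cx hker (by simpa using hCx)
  simp only [mulVecLin_apply] at hx hAx hCx
  refine hx (hrank ξ ((fromRows_mulVec_eq_zero_iff _ _ _).2 ⟨?_, hCx⟩))
  have hMA : cx M *ᵥ (cx A₀ *ᵥ (cx X *ᵥ ξ)) = cx M *ᵥ (cx A *ᵥ (cx X *ᵥ ξ)) := by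
    simp only [mulVec_mulVec, ← cx_mul, ← Matrix.mul_assoc, hA]
  rw [← mulVec_mulVec, sub_mulVec, smul_mulVec, one_mulVec, mulVec_sub, hMA, ← mulVec_sub, hAx,
    sub_self, mulVec_zero]

theorem forall_rank_fromRows_cx_iff {S : Set ℂ} {r : ℝ} (hr : (r : ℂ) ∈ S)
    {𝒜 : Set (Matrix (Fin n) (Fin n) ℝ)} {R : Matrix (Fin k) (Fin T) ℝ}
    (h𝒜 : ∀ A, A ∈ 𝒜 ↔ M * A * X = R) (hne : 𝒜.Nonempty) :
    (∀ A ∈ 𝒜, ∀ lam ∈ S, (fromRows (cx A - lam • 1) (cx C)).rank = n) ↔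
      (LinearMap.ker C.mulVecLin ≤ LinearMap.range X.mulVecLin ∧
        ∀ lam ∈ S, (fromRows (cx R - lam • (cx M * cx X)) (cx C * cx X)).rank = X.rank) := by
  obtain ⟨A₀, hA₀⟩ := hne
  have hR : R = M * A₀ * X := ((h𝒜 A₀).1 hA₀).symm
  have hdata (lam : ℂ) : fromRows (cx R - lam • (cx M * cx X)) (cx C * cx X) =
      fromRows (cx M * (cx A₀ - lam • 1)) (cx C) * cx X := by
    rw [fromRows_mul, hR, cx_mul, cx_mul, Matrix.mul_sub, Matrix.sub_mul, Matrix.mul_smul,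
      Matrix.mul_one, Matrix.smul_mul]
  simp only [rank_fromRows_cx_sub_smul_one_eq_iff, hdata, ← rank_cx X, rank_mul_eq_rank_right_iff]
  constructor
  · intro H
    refine ⟨fun x hx => ?_, fun lam hlam ξ hξ => ?_⟩
    · by_contra hxX
      have hx0 : x ≠ 0 := by rintro rfl; exact hxX (zero_mem _)
      obtain ⟨Δ, hΔX, hΔx⟩ := exists_perturbation_mulVec_eq_of_notMem_range (A₀ := A₀) hxX (r • x)
      refine H (A₀ + Δ) ((h𝒜 _).2 ?_) r hr
        (isUnobservableEigenvalue_ofReal hx0 hΔx (by simpa using hx))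
      rw [Matrix.mul_assoc, Matrix.add_mul, hΔX, add_zero, ← Matrix.mul_assoc, hR]
    · by_contra hξ0
      rw [fromRows_mulVec_eq_zero_iff, ← mulVec_mulVec, sub_mulVec, smul_mulVec, one_mulVec,
        ← neg_sub, mulVec_neg, neg_eq_zero] at hξ
      obtain ⟨Δ, hΔ, μ, hμ, hΔμ⟩ :=
        exists_perturbation_isUnobservableEigenvalue hr hlam hξ0 hξ.1 hξ.2
      refine H (A₀ + Δ) ((h𝒜 _).2 ?_) μ hμ hΔμ
      rw [Matrix.mul_add, hΔ, add_zero, hR]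
  · rintro ⟨hker, hrank⟩ A hA lam hlam
    exact not_isUnobservableEigenvalue_of_ker_le_range hker (by rw [(h𝒜 A).1 hA, hR])
      (hrank lam hlam)

end Hautus

theorem informative_observability_detectability_general (n m p q T k : ℕ)
    (B : Matrix (Fin n) (Fin m) ℝ) (C : Matrix (Fin p) (Fin n) ℝ)
    (D : Matrix (Fin p) (Fin m) ℝ) (E : Matrix (Fin n) (Fin q) ℝ)
    (F : Matrix (Fin p) (Fin q) ℝ)
    (U : Matrix (Fin m) (Fin T) ℝ) (X : Matrix (Fin n) (Fin (T + 1)) ℝ)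
    (Y : Matrix (Fin p) (Fin T) ℝ)
    (M : Matrix (Fin k) (Fin n) ℝ) (N : Matrix (Fin k) (Fin p) ℝ)
    (hAdat : (Adat B C D E F U X Y).Nonempty)
    (hMN : LinearMap.ker (fromCols M N).mulVecLin
      = LinearMap.range (fromRows E F).mulVecLin)
    (R : Matrix (Fin k) (Fin T) ℝ)
    (hR : R = M * (Xplus X - B * U) + N * (Y - C * Xminus X - D * U)) :
    ((∀ A ∈ Adat B C D E F U X Y, ∀ lam : ℂ,
        (fromRows (cx A - lam • 1) (cx C)).rank = n) ↔
      (LinearMap.ker C.mulVecLin ≤ LinearMap.range (Xminus X).mulVecLin ∧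
        ∀ lam : ℂ,
          (fromRows (cx R - lam • (cx M * cx (Xminus X))) (cx C * cx (Xminus X))).rank
            = (Xminus X).rank))
    ∧
    ((∀ A ∈ Adat B C D E F U X Y, ∀ lam : ℂ, 1 ≤ ‖lam‖ →
        (fromRows (cx A - lam • 1) (cx C)).rank = n) ↔
      (LinearMap.ker C.mulVecLin ≤ LinearMap.range (Xminus X).mulVecLin ∧
        ∀ lam : ℂ, 1 ≤ ‖lam‖ →
          (fromRows (cx R - lam • (cx M * cx (Xminus X))) (cx C * cx (Xminus X))).rank
            = (Xminus X).rank)) := by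
  have hAdat_iff := mem_Adat_iff hMN hR
  refine ⟨?_, forall_rank_fromRows_cx_iff (S := {lam | 1 ≤ ‖lam‖}) (r := 1) (by simp)
    hAdat_iff hAdat⟩
  simpa using forall_rank_fromRows_cx_iff (S := Set.univ) (r := 0) (Set.mem_univ _)
    hAdat_iff hAdat

/-- informativity of the data for observability / detectability of (C,A). -/
theorem informative_observability_detectability (n m p q T k : ℕ)
    (hn : 1 ≤ n) (hm : 1 ≤ m) (hp : 1 ≤ p) (hq : 1 ≤ q) (hT : 1 ≤ T)
    (B : Matrix (Fin n) (Fin m) ℝ) (C : Matrix (Fin p) (Fin n) ℝ)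
    (D : Matrix (Fin p) (Fin m) ℝ) (E : Matrix (Fin n) (Fin q) ℝ)
    (F : Matrix (Fin p) (Fin q) ℝ)
    (U : Matrix (Fin m) (Fin T) ℝ) (X : Matrix (Fin n) (Fin (T + 1)) ℝ)
    (Y : Matrix (Fin p) (Fin T) ℝ)
    (M : Matrix (Fin k) (Fin n) ℝ) (N : Matrix (Fin k) (Fin p) ℝ)
    (hAdat : (Adat B C D E F U X Y).Nonempty)
    (hMN : LinearMap.ker (fromCols M N).mulVecLin
      = LinearMap.range (fromRows E F).mulVecLin)
    (R : Matrix (Fin k) (Fin T) ℝ)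
    (hR : R = M * (Xplus X - B * U) + N * (Y - C * Xminus X - D * U)) :
    ((∀ A ∈ Adat B C D E F U X Y, ∀ lam : ℂ,
        (fromRows (cx A - lam • 1) (cx C)).rank = n) ↔
      (LinearMap.ker C.mulVecLin ≤ LinearMap.range (Xminus X).mulVecLin ∧
        ∀ lam : ℂ,
          (fromRows (cx R - lam • (cx M * cx (Xminus X))) (cx C * cx (Xminus X))).rank
            = (Xminus X).rank))
    ∧
    ((∀ A ∈ Adat B C D E F U X Y, ∀ lam : ℂ, 1 ≤ ‖lam‖ →
        (fromRows (cx A - lam • 1) (cx C)).rank = n) ↔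
      (LinearMap.ker C.mulVecLin ≤ LinearMap.range (Xminus X).mulVecLin ∧
        ∀ lam : ℂ, 1 ≤ ‖lam‖ →
          (fromRows (cx R - lam • (cx M * cx (Xminus X))) (cx C * cx (Xminus X))).rank
            = (Xminus X).rank)) :=
  informative_observability_detectability_general n m p q T k B C D E F U X Y M N hAdat hMN R hR
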